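/- arXiv:math/9911083 — 2 statements merged into one kernel-verified Lean document; each statement's English description precedes it below -/
import Mathlib

section
/- Let p be an odd prime and P an extraspecial p-group of exponent p². Then Ω₁(P), the subgroup generated by all elements of order dividing p, is a maximal subgroup of P (of index p), and it is the unique maximal subgroup of P of exponent p. -/
/-! Since `P' = Z(P)` has order `p`, the class-two identity
`(x * y) ^ n = x ^ n * y ^ n * ⁅y, x⁆ ^ n.choose 2` together with `p ∣ p.choose 2` (`p` odd) makes
`g ↦ g ^ p` a homomorphism `P →* Z(P)` whose kernel is `{g | g ^ p = 1}`, hence is `Ω₁(P)`.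
It is onto because `P` has exponent `p²`, so `Ω₁(P)` has index `|Z(P)| = p`. A subgroup of
exponent `p` lies in this kernel, so if it also has index `p` it is the kernel. -/

def IsExtraspecial (p : ℕ) (P : Type*) [Group P] : Prop :=
  Subgroup.center P = commutator P ∧ Subgroup.center P = frattini P ∧
    IsCyclic (Subgroup.center P) ∧ Nat.card (Subgroup.center P) = p

theorem Odd.dvd_choose_two {n : ℕ} (hn : Odd n) : n ∣ n.choose 2 := by
  obtain ⟨k, rfl⟩ := hn
  refine ⟨k, ?_⟩
  rw [Nat.choose_two_right, Nat.add_sub_cancel, mul_left_comm, Nat.mul_div_cancel_left _ two_pos]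

theorem Subgroup.eq_of_le_of_index_eq {G : Type*} [Group G] {H K : Subgroup G} (hle : H ≤ K)
    (hK : K.index ≠ 0) (hindex : H.index = K.index) : H = K := by
  refine le_antisymm hle (Subgroup.relIndex_eq_one.mp ?_)
  rw [← Nat.mul_left_inj hK, Subgroup.relIndex_mul_index hle, hindex, one_mul]

open scoped commutatorElement
open Subgroup

section CentralCommutator

variable {G : Type*} [Group G] {x y : G}

theorem commutatorElement_pow_left_of_mem_center (hc : ⁅y, x⁆ ∈ center G) (n : ℕ) :
    ⁅y ^ n, x⁆ = ⁅y, x⁆ ^ n := by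
  induction n with
  | zero => simp
  | succ n ih =>
    have hexpand : ⁅y * y ^ n, x⁆ = y * ⁅y ^ n, x⁆ * y⁻¹ * ⁅y, x⁆ := by
      simp only [commutatorElement_def]; group
    rw [pow_succ', hexpand, ih, mem_center_iff.mp (pow_mem hc n) y, mul_inv_cancel_right,
      pow_succ]

theorem mul_pow_of_commutatorElement_mem_center (hc : ⁅y, x⁆ ∈ center G) (n : ℕ) :
    (x * y) ^ n = x ^ n * y ^ n * ⁅y, x⁆ ^ n.choose 2 := by
  induction n with
  | zero => simp
  | succ n ih =>
    set c := ⁅y, x⁆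
    have hcentral (k : ℕ) (g : G) : c ^ k * g = g * c ^ k :=
      (mem_center_iff.mp (pow_mem hc k) g).symm
    have hswap : y ^ n * x = c ^ n * (x * y ^ n) := by
      rw [← commutatorElement_pow_left_of_mem_center hc, commutatorElement_def]; group
    calc (x * y) ^ (n + 1) = x ^ n * (y ^ n * x) * y * c ^ n.choose 2 := by
          rw [pow_succ, ih, mul_assoc, hcentral]; simp only [mul_assoc]
      _ = x ^ (n + 1) * y ^ (n + 1) * (c ^ n * c ^ n.choose 2) := by
          rw [hswap, hcentral, pow_succ, pow_succ]
          simp only [mul_assoc]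
          rw [← mul_assoc (c ^ n) y, hcentral n y, mul_assoc]
      _ = x ^ (n + 1) * y ^ (n + 1) * c ^ (n + 1).choose 2 := by
          rw [← pow_add, Nat.choose_succ_succ, Nat.choose_one_right]

end CentralCommutator

section CentralPow

variable {G : Type*} [Group G] {n : ℕ}

theorem commutatorElement_mem_center (hcomm : commutator G ≤ center G) (x y : G) :
    ⁅x, y⁆ ∈ center G :=
  hcomm (commutator_mem_commutator (mem_top x) (mem_top y))

theorem pow_mem_center_of_commutator_le_center (hcomm : commutator G ≤ center G)
    (hZ : ∀ z ∈ center G, z ^ n = 1) (g : G) : g ^ n ∈ center G :=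
  mem_center_iff.mpr fun h => Eq.symm <| commutatorElement_eq_one_iff_mul_comm.mp <| by
    rw [commutatorElement_pow_left_of_mem_center (commutatorElement_mem_center hcomm g h),
      hZ _ (commutatorElement_mem_center hcomm g h)]

theorem mul_pow_of_commutator_le_center (hn : Odd n) (hcomm : commutator G ≤ center G)
    (hZ : ∀ z ∈ center G, z ^ n = 1) (x y : G) : (x * y) ^ n = x ^ n * y ^ n := by
  obtain ⟨k, hk⟩ := hn.dvd_choose_two
  rw [mul_pow_of_commutatorElement_mem_center (commutatorElement_mem_center hcomm y x), hk,
    pow_mul, hZ _ (commutatorElement_mem_center hcomm y x), one_pow, mul_one]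

variable (n) in
def centralPowHom (hn : Odd n) (hcomm : commutator G ≤ center G)
    (hZ : ∀ z ∈ center G, z ^ n = 1) : G →* center G where
  toFun g := ⟨g ^ n, pow_mem_center_of_commutator_le_center hcomm hZ g⟩
  map_one' := Subtype.ext (one_pow n)
  map_mul' x y := Subtype.ext (mul_pow_of_commutator_le_center hn hcomm hZ x y)

theorem mem_ker_centralPowHom {hn : Odd n} {hcomm : commutator G ≤ center G}
    {hZ : ∀ z ∈ center G, z ^ n = 1} {g : G} : g ∈ (centralPowHom n hn hcomm hZ).ker ↔ g ^ n = 1 :=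
  MonoidHom.mem_ker.trans Subtype.ext_iff

theorem closure_setOf_pow_eq_one_eq_ker (hn : Odd n) (hcomm : commutator G ≤ center G)
    (hZ : ∀ z ∈ center G, z ^ n = 1) :
    closure {g : G | g ^ n = 1} = (centralPowHom n hn hcomm hZ).ker := by
  conv_lhs => rw [show {g : G | g ^ n = 1} = (centralPowHom n hn hcomm hZ).ker from
    Set.ext fun _ => mem_ker_centralPowHom.symm]
  exact closure_eq _

end CentralPow

theorem omega1_unique_maximal_exponent_p_general
    (p : ℕ) [Fact p.Prime] (hp : Odd p) (P : Type*) [Group P]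
    (hE : IsExtraspecial p P) (hexp : Monoid.exponent P = p ^ 2) :
    (Subgroup.closure {g : P | g ^ p = 1}).index = p ∧
      ∀ M : Subgroup P, M.index = p → (∀ g ∈ M, g ^ p = 1) →
        M = Subgroup.closure {g : P | g ^ p = 1} := by
  have hp_prime : p.Prime := Fact.out
  obtain ⟨hcenter, -, -, hcard⟩ := hE
  have hZ : ∀ z ∈ center P, z ^ p = 1 := fun z hz =>
    congrArg Subtype.val (hcard ▸ pow_card_eq_one' : (⟨z, hz⟩ : center P) ^ p = 1)
  set f := centralPowHom p hp hcenter.ge hZ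
  have hsurj : f.range = ⊤ := by
    have : Fact (Nat.card (center P)).Prime := hcard ▸ inferInstance
    refine f.range.eq_bot_or_eq_top_of_prime_card.resolve_left fun hbot => ?_
    have hall (g : P) : g ^ p = 1 := mem_ker_centralPowHom.mp <| show g ∈ f.ker by
      rw [MonoidHom.range_eq_bot_iff.mp hbot, MonoidHom.ker_one]
      exact mem_top g
    have hdvd : p ^ 2 ∣ p ^ 1 := by
      rw [← hexp, pow_one]
      exact Monoid.exponent_dvd_of_forall_pow_eq_one hall
    exact absurd ((Nat.pow_dvd_pow_iff_le_right hp_prime.one_lt).mp hdvd) (by norm_num)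
  have hindex : f.ker.index = p := by rw [index_ker, hsurj, card_top, hcard]
  rw [closure_setOf_pow_eq_one_eq_ker hp hcenter.ge hZ]
  exact ⟨hindex, fun M hM hMexp => eq_of_le_of_index_eq
    (fun g hg => mem_ker_centralPowHom.mpr (hMexp g hg)) (hindex.trans_ne hp_prime.ne_zero)
    (hM.trans hindex.symm)⟩

/-- For `p` odd and `P` extraspecial of exponent `p²`, the subgroup
`Ω₁(P) = ⟨g : g^p = 1⟩` is a maximal subgroup (of index `p`), and it is the
unique maximal subgroup of `P` of exponent `p`. -/
theorem omega1_unique_maximal_exponent_p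
    (p : ℕ) [Fact p.Prime] (hp : Odd p) (P : Type*) [Group P] [Finite P]
    (hP : IsPGroup p P) (hE : IsExtraspecial p P)
    (hexp : Monoid.exponent P = p ^ 2) :
    (Subgroup.closure {g : P | g ^ p = 1}).index = p ∧
      ∀ M : Subgroup P, M.index = p → (∀ g ∈ M, g ^ p = 1) →
        M = Subgroup.closure {g : P | g ^ p = 1} :=
  omega1_unique_maximal_exponent_p_general p hp P hE hexp
end

section
/- Let P be an extraspecial p-group of exponent p (p odd) or an extraspecial 2-group with |P| ≥ 2⁵, or any extraspecial p-group of order p^{1+2n} with n ≥ 2. Then for every element g ∈ P of order p, the centralizer C_P(g) is nonabelian, and its Frattini subgroup equals Φ(P) = Z(P). -/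
/-!
Commutators of `P` are central, so for fixed `t` the map `x ↦ ⁅x, t⁆` is a homomorphism
`P → Z(P)` with kernel `C_P(t)`; hence `|P : C_P(g)| ≤ p`, and `P = C_P(g) ⟨x⟩` for some `x`
because `Z(P)` is cyclic. If `C_P(g)` were abelian, its elements commuting with `x` would be
central, and the same homomorphism for `x` restricted to `C_P(g)` would give `|C_P(g)| ≤ p²`,
so `|P| ≤ p³`, which is excluded by `n ≥ 2`.

A maximal subgroup of a finite `p`-group is normal of index `p`, so the Frattini subgroup contains
all commutators and `p`-th powers; conversely an elementary abelian group has trivial Frattini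
subgroup. Hence `Φ(C_P(g)) ≤ Z(P)`, while `⁅C_P(g), C_P(g)⁆ ≤ Φ(C_P(g))` is a nontrivial
subgroup of `Z(P)`, which has prime order.
-/

open Subgroup
open scoped commutatorElement

theorem le_frattini_iff {G : Type*} [Group G] {H : Subgroup G} :
    H ≤ frattini G ↔ ∀ M : Subgroup G, IsCoatom M → H ≤ M :=
  le_iInf₂_iff

section PGroup

variable {p : ℕ} [Fact p.Prime] {G : Type*} [Group G] [Finite G]

theorem IsPGroup.index_eq_of_isCoatom (hG : IsPGroup p G) {M : Subgroup G} (hM : IsCoatom M) :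
    M.index = p := by
  have hp : p.Prime := Fact.out
  obtain ⟨k, hk⟩ := IsPGroup.iff_card.mp (hG.to_subgroup M)
  obtain ⟨m, hm⟩ := hG.index M
  have hm0 : m ≠ 0 := by
    rintro rfl
    exact hM.1 (index_eq_one.mp hm)
  have hdvd : p ^ (k + 1) ∣ Nat.card G := by
    rw [← M.card_mul_index, hk, hm, pow_succ]
    exact mul_dvd_mul_left _ (dvd_pow_self p hm0)
  obtain ⟨K, hK, hMK⟩ := Sylow.exists_subgroup_card_pow_succ hdvd hk
  have hKM : K ≠ M := by
    rintro rfl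
    exact (pow_lt_pow_right₀ hp.one_lt k.lt_succ_self).ne (hk.symm.trans hK)
  have hKtop : K = ⊤ := hM.2 K (lt_of_le_of_ne hMK hKM.symm)
  refine Nat.eq_of_mul_eq_mul_left (Nat.card_pos (α := M)) ?_
  rw [card_mul_index, ← card_top, ← hKtop, hK, hk, pow_succ]

theorem IsPGroup.normal_of_isCoatom (hG : IsPGroup p G) {M : Subgroup G} (hM : IsCoatom M) :
    M.Normal :=
  have := hG.isNilpotent
  Group.normalizerCondition_of_isNilpotent.normal_of_coatom M hM

theorem IsPGroup.commutator_le_frattini (hG : IsPGroup p G) : commutator G ≤ frattini G :=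
  le_frattini_iff.mpr fun M hM => by
    have := hG.normal_of_isCoatom hM
    have : IsCyclic (G ⧸ M) :=
      isCyclic_of_prime_card (p := p) (by rw [← index_eq_card, hG.index_eq_of_isCoatom hM])
    exact Normal.quotient_commutative_iff_commutator_le.mp inferInstance

theorem IsPGroup.pow_mem_frattini (hG : IsPGroup p G) (g : G) : g ^ p ∈ frattini G :=
  zpowers_le.mp <| le_frattini_iff.mpr fun M hM => zpowers_le.mpr <| by
    have := hG.normal_of_isCoatom hM
    simpa only [hG.index_eq_of_isCoatom hM] using M.pow_index_mem g

end PGroup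

section ElementaryAbelian

variable {p : ℕ} {G : Type*} [Group G] [Finite G]

theorem zpowers_eq_zpowers_of_mem_of_pow_eq_one (hp : p.Prime) {y z : G} (hy : y ^ p = 1)
    (hz : z ∈ zpowers y) (hz1 : z ≠ 1) : zpowers z = zpowers y := by
  have hyp : orderOf y ∣ p := orderOf_dvd_of_pow_eq_one hy
  have hzp : orderOf z = p :=
    (hp.eq_one_or_self_of_dvd _ ((orderOf_dvd_of_mem_zpowers hz).trans hyp)).resolve_left
      (mt orderOf_eq_one_iff.mp hz1)
  refine eq_of_le_of_card_ge (zpowers_le.mpr hz) ?_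
  rw [Nat.card_zpowers, Nat.card_zpowers, hzp]
  exact Nat.le_of_dvd hp.pos hyp

theorem frattini_eq_bot_of_pow_eq_one [IsMulCommutative G] (hp : p.Prime)
    (hpow : ∀ g : G, g ^ p = 1) : frattini G = ⊥ := by
  refine eq_bot_iff.mpr fun a ha => mem_bot.mpr <| by_contra fun ha1 => ?_
  obtain ⟨M, haM, hMmax⟩ :=
    (Set.toFinite {H : Subgroup G | a ∉ H}).exists_maximal ⟨⊥, by simpa using ha1⟩
  have hsup : ∀ y ∉ M, a ∈ M ⊔ zpowers y := fun y hy => by_contra fun h =>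
    hy (hMmax h le_sup_left (mem_sup_right (mem_zpowers y)))
  have hcoatom : IsCoatom M := by
    refine ⟨fun h => haM (h ▸ mem_top a), fun H hMH => eq_top_iff.mpr fun y _ => ?_⟩
    have haH : a ∈ H := by_contra fun h => hMH.not_ge (hMmax h hMH.le)
    by_cases hy : y ∈ M
    · exact hMH.le hy
    obtain ⟨m, hm, z, hz, rfl⟩ := mem_sup_of_normal_left.mp (hsup y hy)
    have hzM : z ∉ M := fun h => haM (mul_mem hm h)
    have hzH : z ∈ H := by simpa using mul_mem (inv_mem (hMH.le hm)) haH
    rw [← zpowers_le, ← zpowers_eq_zpowers_of_mem_of_pow_eq_one hp (hpow y) hz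
      (fun h => hzM (h ▸ one_mem M))]
    exact zpowers_le.mpr hzH
  exact haM (frattini_le_coatom hcoatom ha)

theorem frattini_le_of_commutator_le_of_pow_mem (hp : p.Prime) {K : Subgroup G} [K.Normal]
    (hcomm : commutator G ≤ K) (hpow : ∀ g : G, g ^ p ∈ K) : frattini G ≤ K := by
  have := Normal.quotient_commutative_iff_commutator_le.mpr hcomm
  have hbot : frattini (G ⧸ K) = ⊥ := frattini_eq_bot_of_pow_eq_one hp fun q => by
    obtain ⟨g, rfl⟩ := QuotientGroup.mk_surjective q
    rw [← QuotientGroup.mk_pow, QuotientGroup.eq_one_iff]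
    exact hpow g
  simpa [hbot] using frattini_le_comap_frattini_of_surjective (QuotientGroup.mk'_surjective K)

end ElementaryAbelian

theorem Subgroup.eq_of_le_of_ne_bot_of_card_prime {G : Type*} [Group G] {H K : Subgroup G}
    (hle : H ≤ K) (hH : H ≠ ⊥) (hK : (Nat.card K).Prime) : H = K := by
  have : Finite K := Nat.finite_of_card_ne_zero hK.ne_zero
  refine eq_of_le_of_card_ge hle (le_of_eq ?_)
  exact ((hK.eq_one_or_self_of_dvd _ (card_dvd_of_le hle)).resolve_left (mt card_eq_one.mp hH)).symm

theorem MonoidHom.exists_ker_sup_zpowers_eq_top {G H : Type*} [Group G] [Group H] [IsCyclic H]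
    (f : G →* H) : ∃ x : G, f.ker ⊔ zpowers x = ⊤ := by
  obtain ⟨⟨_, x, rfl⟩, hgen⟩ := IsCyclic.exists_generator (α := f.range)
  refine ⟨x, eq_top_iff.mpr fun g _ => ?_⟩
  obtain ⟨k, hk⟩ := mem_zpowers_iff.mp (hgen ⟨f g, g, rfl⟩)
  have hker : g * (x ^ k)⁻¹ ∈ f.ker := by
    have hk' : f x ^ k = f g := congrArg Subtype.val hk
    rw [MonoidHom.mem_ker, map_mul, map_inv, map_zpow, hk', mul_inv_cancel]
  simpa using mul_mem (mem_sup_left hker) (mem_sup_right (zpow_mem_zpowers x k))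

section CentralCommutators

variable {G : Type*} [Group G]

theorem inf_centralizer_le_center {A : Subgroup G} [IsMulCommutative A] {x : G}
    (hx : A ⊔ zpowers x = ⊤) : A ⊓ centralizer {x} ≤ center G := by
  rintro c ⟨hcA, hcx⟩
  have : A ⊔ zpowers x ≤ centralizer {c} :=
    sup_le (fun a ha => mem_centralizer_singleton_iff.mpr
        (congrArg Subtype.val (mul_comm' (⟨a, ha⟩ : A) ⟨c, hcA⟩)))
      (zpowers_le.mpr <| mem_centralizer_singleton_iff.mpr
        (mem_centralizer_singleton_iff.mp hcx).symm)
  rw [hx] at this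
  exact mem_center_iff.mpr fun g => mem_centralizer_singleton_iff.mp (this (mem_top g))

def centralCommutatorHom (h : commutator G ≤ center G) (t : G) : G →* center G where
  toFun x := ⟨⁅x, t⁆, h (commutator_mem_commutator (mem_top x) (mem_top t))⟩
  map_one' := by ext; simp
  map_mul' x y := by
    ext
    have hz := mem_center_iff.mp (h (commutator_mem_commutator (mem_top y) (mem_top t)))
    calc ⁅x * y, t⁆ = x * ⁅y, t⁆ * (t * x⁻¹ * t⁻¹) := by
          simp only [commutatorElement_def]; group
      _ = ⁅y, t⁆ * ⁅x, t⁆ := by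
          rw [hz x]; simp only [commutatorElement_def]; group
      _ = ⁅x, t⁆ * ⁅y, t⁆ := (hz _).symm

theorem ker_centralCommutatorHom (h : commutator G ≤ center G) (t : G) :
    (centralCommutatorHom h t).ker = centralizer {t} := by
  ext x
  rw [MonoidHom.mem_ker, mem_centralizer_singleton_iff, ← commutatorElement_eq_one_iff_mul_comm]
  exact Subtype.ext_iff

theorem index_centralizer_dvd_card_center (h : commutator G ≤ center G) (t : G) :
    (centralizer {t}).index ∣ Nat.card (center G) := by
  rw [← ker_centralCommutatorHom h t, index_ker]
  exact card_subgroup_dvd_card _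

variable [Finite G]

theorem card_le_card_center_sq (h : commutator G ≤ center G) {A : Subgroup G}
    [IsMulCommutative A] {x : G} (hx : A ⊔ zpowers x = ⊤) :
    Nat.card A ≤ Nat.card (center G) ^ 2 := by
  set K := centralizer {x}
  have hK : Nat.card (K.subgroupOf A) ≤ Nat.card (center G) := by
    rw [← card_map_of_injective A.subtype_injective, subgroupOf_map_subtype, inf_comm]
    exact card_le_of_le (inf_centralizer_le_center hx)
  have hKA : K.relIndex A ≤ Nat.card (center G) := calc
    K.relIndex A ≤ K.index := by
      simpa only [relIndex_top_right] using relIndex_le_of_le_right le_top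
        (by rw [relIndex_top_right]; exact index_ne_zero_of_finite)
    _ ≤ Nat.card (center G) := Nat.le_of_dvd Nat.card_pos (index_centralizer_dvd_card_center h x)
  calc Nat.card A = Nat.card (K.subgroupOf A) * K.relIndex A := (card_mul_index _).symm
    _ ≤ Nat.card (center G) ^ 2 := by rw [sq]; exact Nat.mul_le_mul hK hKA

theorem card_le_card_center_pow_three [IsCyclic (center G)] (h : commutator G ≤ center G)
    (t : G) [IsMulCommutative (centralizer {t})] : Nat.card G ≤ Nat.card (center G) ^ 3 := by
  obtain ⟨x, hx⟩ := (centralCommutatorHom h t).exists_ker_sup_zpowers_eq_top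
  rw [ker_centralCommutatorHom] at hx
  calc Nat.card G = Nat.card (centralizer {t}) * (centralizer {t}).index := (card_mul_index _).symm
    _ ≤ Nat.card (center G) ^ 2 * Nat.card (center G) :=
      Nat.mul_le_mul (card_le_card_center_sq h hx)
        (Nat.le_of_dvd Nat.card_pos (index_centralizer_dvd_card_center h t))
    _ = Nat.card (center G) ^ 3 := (pow_succ _ 2).symm

end CentralCommutators

/-- Let `P` be an extraspecial `p`-group of order `p^(1+2n)` with `n ≥ 2`
(this covers exponent-`p` groups for odd `p` and `2`-groups of order `≥ 2⁵`,
excluding the exceptional groups `D₈`, `E` and `M(p³)` of order `p³`).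
Then for every element `g` of order `p`, the centralizer `C_P(g)` is
nonabelian and its Frattini subgroup equals `Φ(P) = Z(P)`. -/
theorem centralizer_frattini_of_order_p
    (p : ℕ) [Fact p.Prime] (P : Type*) [Group P] [Finite P]
    (hP : IsPGroup p P) (hE : IsExtraspecial p P)
    (n : ℕ) (hn : 2 ≤ n) (hcard : Nat.card P = p ^ (1 + 2 * n)) :
    ∀ g : P, orderOf g = p →
      (¬ ∀ a ∈ Subgroup.centralizer {g}, ∀ b ∈ Subgroup.centralizer {g},
          a * b = b * a) ∧
      (frattini ↥(Subgroup.centralizer {g})).map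
          (Subgroup.centralizer {g}).subtype = frattini P ∧
      frattini P = Subgroup.center P := by
  intro g _
  obtain ⟨hZcomm, hZfrat, hZcyc, hZcard⟩ := hE
  have hp : p.Prime := Fact.out
  set C := centralizer {g}
  have hnonabelian : ¬ IsMulCommutative C := fun hC => by
    have hle := card_le_card_center_pow_three hZcomm.ge g
    rw [hcard, hZcard] at hle
    have := (Nat.pow_le_pow_iff_right hp.one_lt).mp hle
    omega
  have hcommutator : ⁅C, C⁆ = center P :=
    eq_of_le_of_ne_bot_of_card_prime ((commutator_mono le_top le_top).trans hZcomm.ge)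
      (mt commutator_eq_bot_iff_le_centralizer.mp
        (mt le_centralizer_iff_isMulCommutative.mp hnonabelian))
      (hZcard ▸ hp)
  refine ⟨fun hC => hnonabelian ⟨⟨fun a b => Subtype.ext (hC a a.2 b b.2)⟩⟩,
    le_antisymm ?_ ?_, hZfrat.symm⟩
  · rw [map_le_iff_le_comap, ← hZfrat]
    refine frattini_le_of_commutator_le_of_pow_mem hp ?_ fun c => ?_
    · rw [← map_le_iff_le_comap, map_subtype_commutator, hcommutator]
    · rw [mem_comap, map_pow, hZfrat]
      exact hP.pow_mem_frattini (c : P)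
  · rw [← hZfrat, ← hcommutator, ← map_subtype_commutator]
    exact map_mono (hP.to_subgroup C).commutator_le_frattini
end
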